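/- Fix b, d > 0 and for α, κ > 0 define φ_α(κ, x) := (κ²/(κ² + αb))·x if |x| ≤ d(κ² + αb)/(κ(κ² + b)), and φ_α(κ, x) := x − sign(x)·dbα/(κ(κ² + b)) otherwise. Then (φ_α)_{α>0} is a non-linear regularizing filter, and for every α, κ > 0 the function φ_α(κ,·) is the proximity operator of the scaled Huber function x ↦ α·(b/κ²)·L(dκ/(κ² + b), x), where L(δ, x) = x²/2 for |x| ≤ δ and L(δ, x) = δ(|x| − δ/2) for |x| > δ. -/
import Mathlib


open Filter

noncomputable section

/-- `p` is the (unique) proximal point at `x` of the real-valued functional `g`. -/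
def IsProxPtR (g : ℝ → ℝ) (x p : ℝ) : Prop :=
  (∀ y : ℝ, (x - p) ^ 2 / 2 + g p ≤ (x - y) ^ 2 / 2 + g y) ∧
  ∀ q : ℝ, (∀ y : ℝ, (x - q) ^ 2 / 2 + g q ≤ (x - y) ^ 2 / 2 + g y) → q = p

/-- A non-linear regularizing filter: `φ α κ` is (F1) monotone, (F2) nonexpansive,
(F3) zero at zero, and (F4) converges pointwise to the identity as `α → 0`. -/
def IsRegFilter (φ : ℝ → ℝ → ℝ → ℝ) : Prop :=
  (∀ α > (0 : ℝ), ∀ κ > (0 : ℝ), Monotone (φ α κ)) ∧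
  (∀ α > (0 : ℝ), ∀ κ > (0 : ℝ), ∀ x y : ℝ, |φ α κ x - φ α κ y| ≤ |x - y|) ∧
  (∀ α > (0 : ℝ), ∀ κ > (0 : ℝ), φ α κ 0 = 0) ∧
  (∀ κ > (0 : ℝ), ∀ c : ℝ,
    Tendsto (fun α => φ α κ c) (nhdsWithin 0 (Set.Ioi 0)) (nhds c))

/-- Assumption B: (B1) `α ↦ |φ_α(κ,x)|` increases as `α` decreases, and (B2) there are
`d, e > 0` with `|φ_α(κ,x)| ≤ (eκ/√α)·|x|` whenever `|x| ≤ dα/κ`. -/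
def AssumptionB (φ : ℝ → ℝ → ℝ → ℝ) : Prop :=
  (∀ κ > (0 : ℝ), ∀ x : ℝ, ∀ α β : ℝ, 0 < α → α ≤ β → |φ β κ x| ≤ |φ α κ x|) ∧
  (∃ d > (0 : ℝ), ∃ e > (0 : ℝ), ∀ κ > (0 : ℝ), ∀ α > (0 : ℝ), ∀ x : ℝ,
    |x| ≤ d * α / κ → |φ α κ x| ≤ e * κ / Real.sqrt α * |x|)

/-- The Huber loss function `L(δ, x)`. -/
noncomputable def huber (δ x : ℝ) : ℝ := if |x| ≤ δ then x ^ 2 / 2 else δ * (|x| - δ / 2)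

/-- The filter of Example `caseA`. -/
noncomputable def phiA (b d α κ x : ℝ) : ℝ :=
  if |x| ≤ d * (κ ^ 2 + α * b) / (κ * (κ ^ 2 + b)) then κ ^ 2 / (κ ^ 2 + α * b) * x
  else x - Real.sign x * (d * b * α / (κ * (κ ^ 2 + b)))

noncomputable def Dd (δ p : ℝ) : ℝ := max (-δ) (min δ p)

lemma Dd_monotone (δ : ℝ) : Monotone (Dd δ) :=
  fun _ _ h => max_le_max le_rfl (min_le_min le_rfl h)

lemma Dd_abs_le {δ : ℝ} (hδ : 0 ≤ δ) (p : ℝ) : |Dd δ p| ≤ δ := by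
  rw [abs_le]
  exact ⟨le_max_left _ _, max_le (by linarith) (min_le_left _ _)⟩

lemma Dd_of_abs_le {δ p : ℝ} (h : |p| ≤ δ) : Dd δ p = p := by
  rw [abs_le] at h
  rw [Dd, min_eq_right h.2, max_eq_right h.1]

lemma Dd_of_ge {δ p : ℝ} (hδ : 0 ≤ δ) (h : δ ≤ p) : Dd δ p = δ := by
  rw [Dd, min_eq_left h, max_eq_right (by linarith)]

lemma Dd_of_le {δ p : ℝ} (hδ : 0 ≤ δ) (h : p ≤ -δ) : Dd δ p = -δ := by
  rw [Dd, min_eq_right (by linarith), max_eq_left (by linarith)]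

lemma huber_subgrad {δ : ℝ} (hδ : 0 < δ) (p y : ℝ) :
    huber δ p + Dd δ p * (y - p) ≤ huber δ y := by
  unfold huber
  split_ifs with hp hy hy
  · rw [Dd_of_abs_le hp]
    nlinarith [sq_nonneg (y - p)]
  · rw [Dd_of_abs_le hp]
    push_neg at hy
    rcases abs_cases y with ⟨h1, _⟩ | ⟨h1, _⟩ <;> rcases abs_le.mp hp with ⟨hp1, hp2⟩ <;>
      nlinarith
  · push_neg at hp
    rcases abs_cases p with ⟨h1, _⟩ | ⟨h1, _⟩
    · rw [Dd_of_ge hδ.le (by linarith)]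
      nlinarith [sq_nonneg (y - δ)]
    · rw [Dd_of_le hδ.le (by linarith)]
      nlinarith [sq_nonneg (y + δ)]
  · push_neg at hp hy
    rcases abs_cases p with ⟨h1, _⟩ | ⟨h1, _⟩
    · rw [Dd_of_ge hδ.le (by linarith)]
      rcases abs_cases y with ⟨h2, _⟩ | ⟨h2, _⟩ <;> nlinarith
    · rw [Dd_of_le hδ.le (by linarith)]
      rcases abs_cases y with ⟨h2, _⟩ | ⟨h2, _⟩ <;> nlinarith

lemma phiA_key {b d α κ : ℝ} (hb : 0 < b) (hd : 0 < d) (hα : 0 < α) (hκ : 0 < κ) (x : ℝ) :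
    x - phiA b d α κ x = α * b / κ ^ 2 * Dd (d * κ / (κ ^ 2 + b)) (phiA b d α κ x) := by
  have hκ2b : 0 < κ ^ 2 + b := by positivity
  have hκ2ab : 0 < κ ^ 2 + α * b := by positivity
  have hts : d * (κ ^ 2 + α * b) / (κ * (κ ^ 2 + b)) - d * b * α / (κ * (κ ^ 2 + b))
      = d * κ / (κ ^ 2 + b) := by field_simp; ring
  unfold phiA
  split_ifs with hx
  · rw [Dd_of_abs_le ?_]
    · field_simp; ring
    · rw [abs_mul, abs_of_pos (show (0:ℝ) < κ ^ 2 / (κ ^ 2 + α * b) by positivity)]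
      calc κ ^ 2 / (κ ^ 2 + α * b) * |x|
          ≤ κ ^ 2 / (κ ^ 2 + α * b) * (d * (κ ^ 2 + α * b) / (κ * (κ ^ 2 + b))) := by
            apply mul_le_mul_of_nonneg_left hx (by positivity)
        _ = d * κ / (κ ^ 2 + b) := by field_simp
  · push_neg at hx
    have ht : 0 < d * (κ ^ 2 + α * b) / (κ * (κ ^ 2 + b)) := by positivity
    rcases lt_trichotomy x 0 with h | h | h
    · rw [Real.sign_of_neg h]
      have hx' : x < -(d * (κ ^ 2 + α * b) / (κ * (κ ^ 2 + b))) := by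
        rcases abs_cases x with ⟨h1, _⟩ | ⟨h1, _⟩ <;> linarith
      rw [Dd_of_le (by positivity) (by linarith)]
      field_simp; ring
    · exfalso; rw [h, abs_zero] at hx; linarith
    · rw [Real.sign_of_pos h]
      have hx' : d * (κ ^ 2 + α * b) / (κ * (κ ^ 2 + b)) < x := by
        rcases abs_cases x with ⟨h1, _⟩ | ⟨h1, _⟩ <;> linarith
      rw [Dd_of_ge (by positivity) (by linarith)]
      field_simp; ring

lemma phiA_prox {b d α κ : ℝ} (hb : 0 < b) (hd : 0 < d) (hα : 0 < α) (hκ : 0 < κ) (x : ℝ) :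
    ((∀ y : ℝ, (x - phiA b d α κ x) ^ 2 / 2 + α * (b / κ ^ 2) * huber (d * κ / (κ ^ 2 + b)) (phiA b d α κ x)
        ≤ (x - y) ^ 2 / 2 + α * (b / κ ^ 2) * huber (d * κ / (κ ^ 2 + b)) y) ∧
    ∀ q : ℝ, (∀ y : ℝ, (x - q) ^ 2 / 2 + α * (b / κ ^ 2) * huber (d * κ / (κ ^ 2 + b)) q
        ≤ (x - y) ^ 2 / 2 + α * (b / κ ^ 2) * huber (d * κ / (κ ^ 2 + b)) y) → q = phiA b d α κ x) := by
  have hκ2b : 0 < κ ^ 2 + b := by positivity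
  set δ := d * κ / (κ ^ 2 + b) with hδdef
  have hδ : 0 < δ := by positivity
  set p := phiA b d α κ x with hpdef
  have hkey := phiA_key hb hd hα hκ x
  have hlam : (0:ℝ) < α * b / κ ^ 2 := by positivity
  have main : ∀ y : ℝ, (x - p) ^ 2 / 2 + α * (b / κ ^ 2) * huber δ p + (y - p) ^ 2 / 2
      ≤ (x - y) ^ 2 / 2 + α * (b / κ ^ 2) * huber δ y := by
    intro y
    have hs := huber_subgrad hδ p y
    have h1 : α * (b / κ ^ 2) * (huber δ p + Dd δ p * (y - p)) ≤ α * (b / κ ^ 2) * huber δ y :=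
      mul_le_mul_of_nonneg_left hs (by positivity)
    have h2 : (x - p) * (y - p) = α * (b / κ ^ 2) * (Dd δ p * (y - p)) := by
      rw [hkey]; ring
    nlinarith [h1, h2]
  constructor
  · intro y
    have := main y
    nlinarith [sq_nonneg (y - p)]
  · intro q hq
    have h1 := hq p
    have h2 := main q
    have h3 : (q - p) ^ 2 = 0 := le_antisymm (by linarith) (sq_nonneg _)
    have := pow_eq_zero_iff (n := 2) (by norm_num) |>.mp h3
    linarith [sub_eq_zero.mp this]

/-- The family `(phiA b d α)_{α>0}` is a non-linear regularizing filter
and, for each `α, κ > 0`, `phiA b d α κ` is the proximity operator of the scaled Huber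
functional `x ↦ α·(b/κ²)·L(dκ/(κ² + b), x)`. -/
theorem statement17 (b d : ℝ) (hb : 0 < b) (hd : 0 < d) :
    IsRegFilter (phiA b d) ∧
    ∀ α > (0 : ℝ), ∀ κ > (0 : ℝ), ∀ x : ℝ,
      IsProxPtR (fun y => α * (b / κ ^ 2) * huber (d * κ / (κ ^ 2 + b)) y) x
        (phiA b d α κ x) := by
  have mono : ∀ α > (0 : ℝ), ∀ κ > (0 : ℝ), Monotone (phiA b d α κ) := by
    intro α hα κ hκ x y hxy
    have hkx := phiA_key hb hd hα hκ x
    have hky := phiA_key hb hd hα hκ y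
    have hlam : (0:ℝ) ≤ α * b / κ ^ 2 := by positivity
    by_contra h
    push_neg at h
    have hD : Dd (d * κ / (κ ^ 2 + b)) (phiA b d α κ y) ≤ Dd (d * κ / (κ ^ 2 + b)) (phiA b d α κ x) :=
      Dd_monotone _ h.le
    have := mul_le_mul_of_nonneg_left hD hlam
    linarith
  refine ⟨⟨mono, ?_, ?_, ?_⟩, ?_⟩
  · -- nonexpansive
    intro α hα κ hκ x y
    have hlam : (0:ℝ) ≤ α * b / κ ^ 2 := by positivity
    rcases le_total x y with h | h
    · have hpq := mono α hα κ hκ h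
      have hkx := phiA_key hb hd hα hκ x
      have hky := phiA_key hb hd hα hκ y
      have hD := mul_le_mul_of_nonneg_left
        (Dd_monotone (d * κ / (κ ^ 2 + b)) hpq) hlam
      rw [abs_of_nonpos (by linarith), abs_of_nonpos (by linarith)]
      linarith
    · have hpq := mono α hα κ hκ h
      have hkx := phiA_key hb hd hα hκ x
      have hky := phiA_key hb hd hα hκ y
      have hD := mul_le_mul_of_nonneg_left
        (Dd_monotone (d * κ / (κ ^ 2 + b)) hpq) hlam
      rw [abs_of_nonneg (by linarith), abs_of_nonneg (by linarith)]
      linarith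
  · -- F3
    intro α hα κ hκ
    have hκ2b : 0 < κ ^ 2 + b := by positivity
    unfold phiA
    rw [abs_zero, if_pos (by positivity)]
    ring
  · -- F4
    intro κ hκ c
    have hκ2b : 0 < κ ^ 2 + b := by positivity
    rw [← tendsto_sub_nhds_zero_iff]
    have hbound : ∀ᶠ α in nhdsWithin (0:ℝ) (Set.Ioi 0),
        ‖phiA b d α κ c - c‖ ≤ b * (d * κ / (κ ^ 2 + b)) / κ ^ 2 * α := by
      filter_upwards [self_mem_nhdsWithin] with α (hα : (0:ℝ) < α)
      have hkey := phiA_key hb hd hα hκ c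
      have habs : |c - phiA b d α κ c| ≤ α * b / κ ^ 2 * (d * κ / (κ ^ 2 + b)) := by
        rw [hkey, abs_mul, abs_of_pos (show (0:ℝ) < α * b / κ ^ 2 by positivity)]
        exact mul_le_mul_of_nonneg_left (Dd_abs_le (by positivity) _) (by positivity)
      rw [Real.norm_eq_abs, abs_sub_comm]
      calc |c - phiA b d α κ c| ≤ α * b / κ ^ 2 * (d * κ / (κ ^ 2 + b)) := habs
        _ = b * (d * κ / (κ ^ 2 + b)) / κ ^ 2 * α := by ring
    have hlim : Tendsto (fun α : ℝ => b * (d * κ / (κ ^ 2 + b)) / κ ^ 2 * α)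
        (nhdsWithin (0:ℝ) (Set.Ioi 0)) (nhds 0) := by
      have : Tendsto (fun α : ℝ => b * (d * κ / (κ ^ 2 + b)) / κ ^ 2 * α)
          (nhds (0:ℝ)) (nhds (b * (d * κ / (κ ^ 2 + b)) / κ ^ 2 * 0)) :=
        (continuous_const.mul continuous_id).tendsto 0
      rw [mul_zero] at this
      exact this.mono_left nhdsWithin_le_nhds
    exact squeeze_zero_norm' hbound hlim
  · intro α hα κ hκ x
    exact phiA_prox hb hd hα hκ x
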